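/- Let z₁, z₂ be distinct points of ℍ₊ and let f have a Stieltjes spectral representation with constant γ ≥ 0 and measure σ. If the 2×2 matrix P((z₁,z₂),(f(z₁),f(z₂))) with entries P_{jk} = (z_j·f(z_j) − conj(z_k·f(z_k)))/(z_j − conj(z_k)) has determinant zero, then either there exist γ' ≥ 0 and s₀ ≥ 0 with f(z) = γ' − s₀/z for all z ∈ ℂ ∖ [0,∞), or there exist s₀ ≥ 0, s₁ ≥ 0 and t₁ > 0 with f(z) = −s₀/z + s₁/(t₁ − z) for all z ∈ ℂ ∖ [0,∞). -/

import Mathlib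

open Complex MeasureTheory Polynomial Matrix
open scoped ComplexConjugate

noncomputable section

/-- The cut `[0, ∞)` viewed as a subset of `ℂ`. -/
def SCut : Set ℂ := {z : ℂ | 0 ≤ z.re ∧ z.im = 0}

/-- The slit domain `ℂ \ [0, ∞)`. -/
def SDom : Set ℂ := {z : ℂ | ¬ (0 ≤ z.re ∧ z.im = 0)}

/-- The Stieltjes class `𝔖`: functions analytic on `ℂ \ [0,∞)` that are either
nonnegative real constants or satisfy (i) `Im f(z) > 0` on the upper half-plane,
(ii) `f(x) > 0` for real `x < 0`, (iii) `conj (f z) = f (conj z)`. -/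
def StieltjesClass (f : ℂ → ℂ) : Prop :=
  AnalyticOnNhd ℂ f SDom ∧
  ((∃ c : ℝ, 0 ≤ c ∧ ∀ z ∈ SDom, f z = (c : ℂ)) ∨
    ((∀ z : ℂ, 0 < z.im → 0 < (f z).im) ∧
     (∀ x : ℝ, x < 0 → ∃ r : ℝ, 0 < r ∧ f (x : ℂ) = (r : ℂ)) ∧
     (∀ z ∈ SDom, conj (f z) = f (conj z))))

/-- `f` has a Stieltjes spectral representation with constant `γ ≥ 0` and positive Borel
measure `σ` supported on `[0,∞)` with `∫ (1+t)⁻¹ dσ < ∞`. -/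
def IsStieltjesRep (f : ℂ → ℂ) (γ : ℝ) (σ : Measure ℝ) : Prop :=
  0 ≤ γ ∧ σ (Set.Iio 0) = 0 ∧
  (∫⁻ t, ENNReal.ofReal ((1 + t)⁻¹) ∂σ) < ⊤ ∧
  ∀ z ∈ SDom, f z = (γ : ℂ) + ∫ t, ((t : ℂ) - z)⁻¹ ∂σ

lemma mem_SDom_of_im_pos {z : ℂ} (h : 0 < z.im) : z ∈ SDom := by
  simp only [SDom, Set.mem_setOf_eq]; intro ⟨_, h2⟩; exact h.ne' h2

lemma conj_mem_SDom {z : ℂ} (h : z ∈ SDom) : conj z ∈ SDom := by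
  simp only [SDom, Set.mem_setOf_eq, Complex.conj_re, Complex.conj_im, neg_eq_zero] at *
  exact h

lemma ne_of_SDom {z : ℂ} (h : z ∈ SDom) {t : ℝ} (ht : 0 ≤ t) : (t : ℂ) ≠ z := by
  intro he; apply h; rw [← he]; simp [ht]

/-- lower bound: exists c>0 with c*(1+t) ≤ |t - z| for t ≥ 0 -/
lemma SDom_bound {z : ℂ} (h : z ∈ SDom) :
    ∃ c : ℝ, 0 < c ∧ ∀ t : ℝ, 0 ≤ t → c * (1 + t) ≤ ‖(t : ℂ) - z‖ := by
  obtain ⟨ε, hε, hεb⟩ : ∃ ε : ℝ, 0 < ε ∧ ∀ t : ℝ, 0 ≤ t → ε ≤ ‖(t : ℂ) - z‖ := by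
    by_cases him : z.im = 0
    · have hre : z.re < 0 := by
        simp only [SDom, Set.mem_setOf_eq] at h; push_neg at h
        exact lt_of_not_ge fun hc => absurd him (h hc)
      refine ⟨-z.re, by linarith, fun t ht => ?_⟩
      calc -z.re ≤ t - z.re := by linarith
        _ ≤ |((t:ℂ) - z).re| := by rw [Complex.sub_re, Complex.ofReal_re]; exact le_abs_self _
        _ ≤ ‖(t:ℂ) - z‖ := Complex.abs_re_le_norm _
    · refine ⟨|z.im|, abs_pos.mpr him, fun t ht => ?_⟩
      calc |z.im| = |((t:ℂ) - z).im| := by rw [Complex.sub_im, Complex.ofReal_im, zero_sub, abs_neg]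
        _ ≤ ‖(t:ℂ) - z‖ := Complex.abs_im_le_norm _
  refine ⟨min ε 1 / (2 * (1 + ‖z‖)), by positivity, fun t ht => ?_⟩
  have habs : 0 ≤ ‖z‖ := norm_nonneg z
  rcases le_or_gt t (1 + 2 * ‖z‖) with hc | hc
  · calc min ε 1 / (2 * (1 + ‖z‖)) * (1 + t)
        ≤ min ε 1 / (2 * (1 + ‖z‖)) * (2 * (1 + ‖z‖)) := by
          apply mul_le_mul_of_nonneg_left (by linarith) (by positivity)
      _ = min ε 1 := by field_simp
      _ ≤ ε := min_le_left _ _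
      _ ≤ ‖(t:ℂ) - z‖ := hεb t ht
  · have h1 : min ε 1 / (2 * (1 + ‖z‖)) ≤ 1 / 2 := by
      rw [div_le_div_iff₀ (by positivity) (by norm_num)]
      have : min ε 1 ≤ 1 := min_le_right _ _
      nlinarith
    calc min ε 1 / (2 * (1 + ‖z‖)) * (1 + t) ≤ 1/2 * (1 + t) := by
          apply mul_le_mul_of_nonneg_right h1 (by linarith)
      _ ≤ t - ‖z‖ := by linarith
      _ ≤ ‖(t:ℂ) - z‖ := by
          have h2 : |‖(t:ℂ)‖ - ‖z‖| ≤ ‖(t:ℂ) - z‖ :=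
            abs_norm_sub_norm_le _ _
          rw [Complex.norm_real, Real.norm_eq_abs, _root_.abs_of_nonneg ht] at h2
          exact (le_abs_self _).trans h2

lemma ae_nonneg_of (σ : Measure ℝ) (h : σ (Set.Iio 0) = 0) : ∀ᵐ t ∂σ, 0 ≤ t := by
  rw [MeasureTheory.ae_iff]
  convert h using 2
  ext t; simp [Set.mem_Iio, not_le]

lemma integrable_inv_sub (σ : Measure ℝ) (h0 : σ (Set.Iio 0) = 0)
    (hfin : (∫⁻ t, ENNReal.ofReal ((1 + t)⁻¹) ∂σ) < ⊤) {z : ℂ} (hz : z ∈ SDom) :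
    Integrable (fun t : ℝ => ((t : ℂ) - z)⁻¹) σ := by
  obtain ⟨c, hc, hcb⟩ := SDom_bound hz
  constructor
  · exact ((Complex.measurable_ofReal.sub measurable_const).inv).aestronglyMeasurable
  · rw [MeasureTheory.hasFiniteIntegral_def]
    calc ∫⁻ t, ‖((t : ℂ) - z)⁻¹‖ₑ ∂σ
        ≤ ∫⁻ t, ENNReal.ofReal (c⁻¹ * (1 + t)⁻¹) ∂σ := by
          apply lintegral_mono_ae
          filter_upwards [ae_nonneg_of σ h0] with t ht
          have hb := hcb t ht
          have hpos : 0 < c * (1 + t) := by positivity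
          have : ‖((t:ℂ) - z)⁻¹‖ ≤ c⁻¹ * (1+t)⁻¹ := by
            rw [norm_inv]
            rw [← mul_inv]
            exact inv_anti₀ hpos hb
          calc (‖((t : ℂ) - z)⁻¹‖ₑ : ENNReal) = ENNReal.ofReal (‖((t:ℂ) - z)⁻¹‖) := by
                rw [ofReal_norm]
            _ ≤ ENNReal.ofReal (c⁻¹ * (1+t)⁻¹) := ENNReal.ofReal_le_ofReal this
      _ = ENNReal.ofReal c⁻¹ * ∫⁻ t, ENNReal.ofReal ((1 + t)⁻¹) ∂σ := by
          rw [← MeasureTheory.lintegral_const_mul]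
          · congr 1; ext t
            rw [ENNReal.ofReal_mul (by positivity)]
          · exact ENNReal.measurable_ofReal.comp ((measurable_const.add measurable_id).inv)
      _ < ⊤ := ENNReal.mul_lt_top ENNReal.ofReal_lt_top hfin

lemma mass_finite (σ : Measure ℝ)
    (hfin : (∫⁻ t, ENNReal.ofReal ((1 + t)⁻¹) ∂σ) < ⊤) {x : ℝ} (hx : 0 ≤ x) :
    σ {x} < ⊤ := by
  have h1 : ENNReal.ofReal ((1 + x)⁻¹) * σ {x} ≤ ∫⁻ t, ENNReal.ofReal ((1 + t)⁻¹) ∂σ := by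
    calc ENNReal.ofReal ((1 + x)⁻¹) * σ {x}
        = ∫⁻ t in {x}, ENNReal.ofReal ((1 + t)⁻¹) ∂σ := by
          rw [MeasureTheory.lintegral_singleton]
      _ ≤ ∫⁻ t, ENNReal.ofReal ((1 + t)⁻¹) ∂σ := MeasureTheory.setLIntegral_le_lintegral _ _
  have h2 : ENNReal.ofReal ((1 + x)⁻¹) ≠ 0 := by
    simp only [ne_eq, ENNReal.ofReal_eq_zero, not_le]
    positivity
  by_contra hc
  push_neg at hc
  rw [top_le_iff] at hc
  rw [hc, ENNReal.mul_top h2] at h1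
  exact (h1.trans_lt hfin).ne rfl

lemma conc_two (σ : Measure ℝ) {t₁ : ℝ} (ht : t₁ ≠ 0) (h : ∀ᵐ t ∂σ, t = 0 ∨ t = t₁) :
    σ = σ {0} • Measure.dirac 0 + σ {t₁} • Measure.dirac (t₁ : ℝ) := by
  have hnull : σ {t : ℝ | ¬ (t = 0 ∨ t = t₁)} = 0 := by rwa [MeasureTheory.ae_iff] at h
  ext s hs
  have hpair : MeasurableSet ({0, t₁} : Set ℝ) := ((Set.finite_singleton t₁).insert 0).measurableSet
  have hsplit : σ s = σ (s ∩ {0, t₁}) + σ (s \ {0, t₁}) :=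
    (MeasureTheory.measure_inter_add_diff s hpair).symm
  have hdiff : σ (s \ {0, t₁}) = 0 := by
    apply MeasureTheory.measure_mono_null _ hnull
    intro t ⟨hts, htn⟩
    simp only [Set.mem_insert_iff, Set.mem_singleton_iff] at htn
    exact htn
  have hinter : σ (s ∩ {0, t₁}) = σ (s ∩ {0}) + σ (s ∩ {t₁}) := by
    rw [show s ∩ ({0, t₁} : Set ℝ) = (s ∩ {0}) ∪ (s ∩ {t₁}) by
      rw [← Set.inter_union_distrib_left]; rfl]
    apply MeasureTheory.measure_union _ (hs.inter (measurableSet_singleton _))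
    apply Set.disjoint_of_subset Set.inter_subset_right Set.inter_subset_right
    simpa [Set.disjoint_singleton] using Ne.symm ht
  have hone : ∀ x : ℝ, σ (s ∩ {x}) = (Measure.dirac x s) * σ {x} := by
    intro x
    rw [Measure.dirac_apply' x hs]
    by_cases hxs : x ∈ s
    · rw [Set.inter_eq_right.mpr (Set.singleton_subset_iff.mpr hxs)]
      simp [hxs]
    · rw [show s ∩ ({x} : Set ℝ) = ∅ by
        ext y; simp only [Set.mem_inter_iff, Set.mem_singleton_iff, Set.mem_empty_iff_false,
          iff_false]; rintro ⟨hy, rfl⟩; exact hxs hy]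
      simp [hxs]
  rw [hsplit, hdiff, hinter, hone 0, hone t₁, add_zero]
  simp only [Measure.add_apply, Measure.smul_apply, smul_eq_mul]
  ring

lemma integral_conc_two (σ : Measure ℝ) {t₁ : ℝ} (g : ℝ → ℂ)
    (hσeq : σ = σ {0} • Measure.dirac 0 + σ {t₁} • Measure.dirac (t₁ : ℝ))
    (hint : Integrable g σ) :
    ∫ t, g t ∂σ = (σ {0}).toReal • g 0 + (σ {t₁}).toReal • g t₁ := by
  have h2 : Integrable g (σ {0} • Measure.dirac (0:ℝ) + σ {t₁} • Measure.dirac (t₁ : ℝ)) := by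
    rwa [← hσeq]
  rw [MeasureTheory.integrable_add_measure] at h2
  calc ∫ t, g t ∂σ = ∫ t, g t ∂(σ {0} • Measure.dirac 0 + σ {t₁} • Measure.dirac (t₁ : ℝ)) := by
        rw [← hσeq]
    _ = (∫ t, g t ∂(σ {0} • Measure.dirac (0:ℝ))) + ∫ t, g t ∂(σ {t₁} • Measure.dirac (t₁:ℝ)) :=
        MeasureTheory.integral_add_measure h2.1 h2.2
    _ = (σ {0}).toReal • g 0 + (σ {t₁}).toReal • g t₁ := by
        rw [MeasureTheory.integral_smul_measure, MeasureTheory.integral_smul_measure,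
          MeasureTheory.integral_dirac, MeasureTheory.integral_dirac]

lemma sub_conj_ne_zero {z w : ℂ} (hz : 0 < z.im) (hw : 0 < w.im) : z - conj w ≠ 0 := by
  intro h
  have : (z - conj w).im = 0 := by rw [h]; simp
  rw [Complex.sub_im, Complex.conj_im] at this
  linarith

lemma conj_mem_SDom' {w : ℂ} (hw : 0 < w.im) : conj w ∈ SDom :=
  conj_mem_SDom (mem_SDom_of_im_pos hw)

lemma integrable_kernel (σ : Measure ℝ) (h0 : σ (Set.Iio 0) = 0)
    (hfin : (∫⁻ t, ENNReal.ofReal ((1 + t)⁻¹) ∂σ) < ⊤) {z w : ℂ}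
    (hz : 0 < z.im) (hw : 0 < w.im) :
    Integrable (fun t : ℝ => (t : ℂ) * (((t : ℂ) - z)⁻¹ * ((t : ℂ) - conj w)⁻¹)) σ := by
  have hg1 := integrable_inv_sub σ h0 hfin (mem_SDom_of_im_pos hz)
  have hg2 := integrable_inv_sub σ h0 hfin (conj_mem_SDom' hw)
  have hzw : z - conj w ≠ 0 := sub_conj_ne_zero hz hw
  have hcomb : Integrable
      (fun t : ℝ => (z - conj w)⁻¹ * (z * ((t:ℂ) - z)⁻¹ - conj w * ((t:ℂ) - conj w)⁻¹)) σ :=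
    ((hg1.const_mul z).sub (hg2.const_mul (conj w))).const_mul _
  apply hcomb.congr
  filter_upwards [ae_nonneg_of σ h0] with t ht
  have h1 : (t:ℂ) - z ≠ 0 := sub_ne_zero.mpr (ne_of_SDom (mem_SDom_of_im_pos hz) ht)
  have h2 : (t:ℂ) - conj w ≠ 0 := sub_ne_zero.mpr (ne_of_SDom (conj_mem_SDom' hw) ht)
  field_simp
  ring

lemma entry_rep (f : ℂ → ℂ) (γ : ℝ) (σ : Measure ℝ) (h0 : σ (Set.Iio 0) = 0)
    (hfin : (∫⁻ t, ENNReal.ofReal ((1 + t)⁻¹) ∂σ) < ⊤)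
    (hf : ∀ z ∈ SDom, f z = (γ : ℂ) + ∫ t, ((t : ℂ) - z)⁻¹ ∂σ)
    {z w : ℂ} (hz : 0 < z.im) (hw : 0 < w.im) :
    (z * f z - conj (w * f w)) / (z - conj w) =
      (γ : ℂ) + ∫ t, (t : ℂ) * (((t : ℂ) - z)⁻¹ * ((t : ℂ) - conj w)⁻¹) ∂σ := by
  have hg1 := integrable_inv_sub σ h0 hfin (mem_SDom_of_im_pos hz)
  have hg2 := integrable_inv_sub σ h0 hfin (conj_mem_SDom' hw)
  have hzw : z - conj w ≠ 0 := sub_conj_ne_zero hz hw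
  have hfz : f z = (γ : ℂ) + ∫ t, ((t : ℂ) - z)⁻¹ ∂σ := hf z (mem_SDom_of_im_pos hz)
  have hfw : conj (f w) = (γ : ℂ) + ∫ t, ((t : ℂ) - conj w)⁻¹ ∂σ := by
    rw [hf w (mem_SDom_of_im_pos hw), _root_.map_add, ← integral_conj]
    congr 1
    · exact Complex.conj_ofReal γ
    · congr 1; ext t
      rw [_root_.map_inv₀, _root_.map_sub, Complex.conj_ofReal]
  have hnum : z * f z - conj (w * f w) =
      (γ : ℂ) * (z - conj w) + ∫ t, (z * ((t:ℂ) - z)⁻¹ - conj w * ((t:ℂ) - conj w)⁻¹) ∂σ := by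
    rw [_root_.map_mul, hfz, hfw, integral_sub (hg1.const_mul z) (hg2.const_mul (conj w)),
      integral_const_mul, integral_const_mul]
    ring
  have hker : ∫ t, (z * ((t:ℂ) - z)⁻¹ - conj w * ((t:ℂ) - conj w)⁻¹) ∂σ =
      (z - conj w) * ∫ t, (t : ℂ) * (((t : ℂ) - z)⁻¹ * ((t : ℂ) - conj w)⁻¹) ∂σ := by
    rw [← integral_const_mul]
    apply integral_congr_ae
    filter_upwards [ae_nonneg_of σ h0] with t ht
    have h1 : (t:ℂ) - z ≠ 0 := sub_ne_zero.mpr (ne_of_SDom (mem_SDom_of_im_pos hz) ht)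
    have h2 : (t:ℂ) - conj w ≠ 0 := sub_ne_zero.mpr (ne_of_SDom (conj_mem_SDom' hw) ht)
    field_simp
    ring
  rw [hnum, hker, div_eq_iff hzw]
  ring

lemma Q_expand (σ : Measure ℝ) (h0 : σ (Set.Iio 0) = 0)
    (hfin : (∫⁻ t, ENNReal.ofReal ((1 + t)⁻¹) ∂σ) < ⊤) {z₁ z₂ : ℂ}
    (h₁ : 0 < z₁.im) (h₂ : 0 < z₂.im) (u₁ u₂ : ℂ) :
    Integrable (fun t : ℝ => (t : ℂ) *
      ((u₁ * ((t:ℂ) - z₁)⁻¹ + u₂ * ((t:ℂ) - z₂)⁻¹) *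
        conj (u₁ * ((t:ℂ) - z₁)⁻¹ + u₂ * ((t:ℂ) - z₂)⁻¹))) σ ∧
    ∫ t, (t : ℂ) * ((u₁ * ((t:ℂ) - z₁)⁻¹ + u₂ * ((t:ℂ) - z₂)⁻¹) *
        conj (u₁ * ((t:ℂ) - z₁)⁻¹ + u₂ * ((t:ℂ) - z₂)⁻¹)) ∂σ =
      u₁ * conj u₁ * ∫ t, (t : ℂ) * (((t:ℂ) - z₁)⁻¹ * ((t:ℂ) - conj z₁)⁻¹) ∂σ +
      u₁ * conj u₂ * ∫ t, (t : ℂ) * (((t:ℂ) - z₁)⁻¹ * ((t:ℂ) - conj z₂)⁻¹) ∂σ +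
      u₂ * conj u₁ * ∫ t, (t : ℂ) * (((t:ℂ) - z₂)⁻¹ * ((t:ℂ) - conj z₁)⁻¹) ∂σ +
      u₂ * conj u₂ * ∫ t, (t : ℂ) * (((t:ℂ) - z₂)⁻¹ * ((t:ℂ) - conj z₂)⁻¹) ∂σ := by
  have hK11 := integrable_kernel σ h0 hfin h₁ h₁
  have hK12 := integrable_kernel σ h0 hfin h₁ h₂
  have hK21 := integrable_kernel σ h0 hfin h₂ h₁
  have hK22 := integrable_kernel σ h0 hfin h₂ h₂
  have hpt : ∀ t : ℝ, (t : ℂ) *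
      ((u₁ * ((t:ℂ) - z₁)⁻¹ + u₂ * ((t:ℂ) - z₂)⁻¹) *
        conj (u₁ * ((t:ℂ) - z₁)⁻¹ + u₂ * ((t:ℂ) - z₂)⁻¹)) =
      u₁ * conj u₁ * ((t : ℂ) * (((t:ℂ) - z₁)⁻¹ * ((t:ℂ) - conj z₁)⁻¹)) +
      u₁ * conj u₂ * ((t : ℂ) * (((t:ℂ) - z₁)⁻¹ * ((t:ℂ) - conj z₂)⁻¹)) +
      u₂ * conj u₁ * ((t : ℂ) * (((t:ℂ) - z₂)⁻¹ * ((t:ℂ) - conj z₁)⁻¹)) +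
      u₂ * conj u₂ * ((t : ℂ) * (((t:ℂ) - z₂)⁻¹ * ((t:ℂ) - conj z₂)⁻¹)) := by
    intro t
    have hc : conj (u₁ * ((t:ℂ) - z₁)⁻¹ + u₂ * ((t:ℂ) - z₂)⁻¹) =
        conj u₁ * ((t:ℂ) - conj z₁)⁻¹ + conj u₂ * ((t:ℂ) - conj z₂)⁻¹ := by
      simp only [_root_.map_add, _root_.map_mul, _root_.map_inv₀, _root_.map_sub, Complex.conj_ofReal]
    rw [hc]
    ring
  have hintsum : Integrable (fun t : ℝ =>
      u₁ * conj u₁ * ((t : ℂ) * (((t:ℂ) - z₁)⁻¹ * ((t:ℂ) - conj z₁)⁻¹)) +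
      u₁ * conj u₂ * ((t : ℂ) * (((t:ℂ) - z₁)⁻¹ * ((t:ℂ) - conj z₂)⁻¹)) +
      u₂ * conj u₁ * ((t : ℂ) * (((t:ℂ) - z₂)⁻¹ * ((t:ℂ) - conj z₁)⁻¹)) +
      u₂ * conj u₂ * ((t : ℂ) * (((t:ℂ) - z₂)⁻¹ * ((t:ℂ) - conj z₂)⁻¹))) σ :=
    (((hK11.const_mul _).add (hK12.const_mul _)).add (hK21.const_mul _)).add
      (hK22.const_mul _)
  constructor
  · apply hintsum.congr
    filter_upwards with t
    exact (hpt t).symm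
  · rw [show (fun t : ℝ => (t : ℂ) *
      ((u₁ * ((t:ℂ) - z₁)⁻¹ + u₂ * ((t:ℂ) - z₂)⁻¹) *
        conj (u₁ * ((t:ℂ) - z₁)⁻¹ + u₂ * ((t:ℂ) - z₂)⁻¹))) = _ from funext hpt]
    have E3 : ∫ t, (u₁ * conj u₁ * ((t : ℂ) * (((t:ℂ) - z₁)⁻¹ * ((t:ℂ) - conj z₁)⁻¹)) +
        u₁ * conj u₂ * ((t : ℂ) * (((t:ℂ) - z₁)⁻¹ * ((t:ℂ) - conj z₂)⁻¹))) ∂σ =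
        (∫ t, u₁ * conj u₁ * ((t : ℂ) * (((t:ℂ) - z₁)⁻¹ * ((t:ℂ) - conj z₁)⁻¹)) ∂σ) +
        ∫ t, u₁ * conj u₂ * ((t : ℂ) * (((t:ℂ) - z₁)⁻¹ * ((t:ℂ) - conj z₂)⁻¹)) ∂σ :=
      integral_add (hK11.const_mul _) (hK12.const_mul _)
    have E2 : ∫ t, (u₁ * conj u₁ * ((t : ℂ) * (((t:ℂ) - z₁)⁻¹ * ((t:ℂ) - conj z₁)⁻¹)) +
        u₁ * conj u₂ * ((t : ℂ) * (((t:ℂ) - z₁)⁻¹ * ((t:ℂ) - conj z₂)⁻¹)) +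
        u₂ * conj u₁ * ((t : ℂ) * (((t:ℂ) - z₂)⁻¹ * ((t:ℂ) - conj z₁)⁻¹))) ∂σ =
        (∫ t, (u₁ * conj u₁ * ((t : ℂ) * (((t:ℂ) - z₁)⁻¹ * ((t:ℂ) - conj z₁)⁻¹)) +
          u₁ * conj u₂ * ((t : ℂ) * (((t:ℂ) - z₁)⁻¹ * ((t:ℂ) - conj z₂)⁻¹))) ∂σ) +
        ∫ t, u₂ * conj u₁ * ((t : ℂ) * (((t:ℂ) - z₂)⁻¹ * ((t:ℂ) - conj z₁)⁻¹)) ∂σ :=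
      integral_add ((hK11.const_mul _).add (hK12.const_mul _)) (hK21.const_mul _)
    have E1 : ∫ t, (u₁ * conj u₁ * ((t : ℂ) * (((t:ℂ) - z₁)⁻¹ * ((t:ℂ) - conj z₁)⁻¹)) +
        u₁ * conj u₂ * ((t : ℂ) * (((t:ℂ) - z₁)⁻¹ * ((t:ℂ) - conj z₂)⁻¹)) +
        u₂ * conj u₁ * ((t : ℂ) * (((t:ℂ) - z₂)⁻¹ * ((t:ℂ) - conj z₁)⁻¹)) +
        u₂ * conj u₂ * ((t : ℂ) * (((t:ℂ) - z₂)⁻¹ * ((t:ℂ) - conj z₂)⁻¹))) ∂σ =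
        (∫ t, (u₁ * conj u₁ * ((t : ℂ) * (((t:ℂ) - z₁)⁻¹ * ((t:ℂ) - conj z₁)⁻¹)) +
          u₁ * conj u₂ * ((t : ℂ) * (((t:ℂ) - z₁)⁻¹ * ((t:ℂ) - conj z₂)⁻¹)) +
          u₂ * conj u₁ * ((t : ℂ) * (((t:ℂ) - z₂)⁻¹ * ((t:ℂ) - conj z₁)⁻¹))) ∂σ) +
        ∫ t, u₂ * conj u₂ * ((t : ℂ) * (((t:ℂ) - z₂)⁻¹ * ((t:ℂ) - conj z₂)⁻¹)) ∂σ :=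
      integral_add (((hK11.const_mul _).add (hK12.const_mul _)).add (hK21.const_mul _))
        (hK22.const_mul _)
    rw [E1, E2, E3, integral_const_mul, integral_const_mul, integral_const_mul, integral_const_mul]

lemma conclude (f : ℂ → ℂ) (γ : ℝ) (σ : Measure ℝ) (h0 : σ (Set.Iio 0) = 0)
    (hfin : (∫⁻ t, ENNReal.ofReal ((1 + t)⁻¹) ∂σ) < ⊤)
    (hf : ∀ z ∈ SDom, f z = (γ : ℂ) + ∫ t, ((t : ℂ) - z)⁻¹ ∂σ)
    {t₁ : ℝ} (ht₁ : 0 < t₁) (hae : ∀ᵐ t ∂σ, t = 0 ∨ t = t₁) :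
    ∀ z ∈ SDom, f z = (γ : ℂ) - ((σ {0}).toReal : ℂ) / z +
      ((σ {t₁}).toReal : ℂ) / ((t₁ : ℂ) - z) := by
  intro z hz
  have hconc := conc_two σ ht₁.ne' hae
  have hint := integrable_inv_sub σ h0 hfin hz
  rw [hf z hz, integral_conc_two σ _ hconc hint]
  have h1 : (((0:ℝ):ℂ) - z)⁻¹ = -z⁻¹ := by
    push_cast
    rw [zero_sub, inv_neg]
  rw [h1]
  simp only [Complex.real_smul]
  ring

lemma ae_zero_conclude (f : ℂ → ℂ) (γ : ℝ) (σ : Measure ℝ) (h0 : σ (Set.Iio 0) = 0)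
    (hfin : (∫⁻ t, ENNReal.ofReal ((1 + t)⁻¹) ∂σ) < ⊤)
    (hf : ∀ z ∈ SDom, f z = (γ : ℂ) + ∫ t, ((t : ℂ) - z)⁻¹ ∂σ)
    (hγ : 0 ≤ γ) (hae : ∀ᵐ t ∂σ, t = 0) :
    ∃ γ' s₀ : ℝ, 0 ≤ γ' ∧ 0 ≤ s₀ ∧ ∀ z ∈ SDom, f z = (γ' : ℂ) - (s₀ : ℂ) / z := by
  refine ⟨γ, (σ {0}).toReal, hγ, ENNReal.toReal_nonneg, fun z hz => ?_⟩
  have hone : σ {(1:ℝ)} = 0 := by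
    apply MeasureTheory.measure_mono_null _ ((MeasureTheory.ae_iff).mp hae)
    intro t htm
    simp only [Set.mem_singleton_iff] at htm
    simp [htm]
  have h := conclude f γ σ h0 hfin hf one_pos (by filter_upwards [hae] with t ht; exact Or.inl ht) z hz
  rw [h, hone]
  simp

theorem statement6' (z₁ z₂ : ℂ) (h₁ : 0 < z₁.im) (h₂ : 0 < z₂.im) (hne : z₁ ≠ z₂)
    (f : ℂ → ℂ) (γ : ℝ) (σ : Measure ℝ)
    (hγ : 0 ≤ γ) (h0 : σ (Set.Iio 0) = 0)
    (hfin : (∫⁻ t, ENNReal.ofReal ((1 + t)⁻¹) ∂σ) < ⊤)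
    (hf : ∀ z ∈ SDom, f z = (γ : ℂ) + ∫ t, ((t : ℂ) - z)⁻¹ ∂σ)
    (hdet : (z₁ * f z₁ - conj (z₁ * f z₁)) / (z₁ - conj z₁) *
        ((z₂ * f z₂ - conj (z₂ * f z₂)) / (z₂ - conj z₂)) -
      (z₁ * f z₁ - conj (z₂ * f z₂)) / (z₁ - conj z₂) *
        ((z₂ * f z₂ - conj (z₁ * f z₁)) / (z₂ - conj z₁)) = 0) :
    (∃ γ' s₀ : ℝ, 0 ≤ γ' ∧ 0 ≤ s₀ ∧
        ∀ z ∈ SDom, f z = (γ' : ℂ) - (s₀ : ℂ) / z) ∨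
    (∃ s₀ s₁ t₁ : ℝ, 0 ≤ s₀ ∧ 0 ≤ s₁ ∧ 0 < t₁ ∧
        ∀ z ∈ SDom, f z = -(s₀ : ℂ) / z + (s₁ : ℂ) / ((t₁ : ℂ) - z)) := by
  rw [entry_rep f γ σ h0 hfin hf h₁ h₁, entry_rep f γ σ h0 hfin hf h₁ h₂,
    entry_rep f γ σ h0 hfin hf h₂ h₁, entry_rep f γ σ h0 hfin hf h₂ h₂] at hdet
  set A : ℂ := (γ:ℂ) + ∫ t, (t : ℂ) * (((t:ℂ) - z₁)⁻¹ * ((t:ℂ) - conj z₁)⁻¹) ∂σ with hA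
  set B : ℂ := (γ:ℂ) + ∫ t, (t : ℂ) * (((t:ℂ) - z₁)⁻¹ * ((t:ℂ) - conj z₂)⁻¹) ∂σ with hB
  set C : ℂ := (γ:ℂ) + ∫ t, (t : ℂ) * (((t:ℂ) - z₂)⁻¹ * ((t:ℂ) - conj z₁)⁻¹) ∂σ with hC
  set D : ℂ := (γ:ℂ) + ∫ t, (t : ℂ) * (((t:ℂ) - z₂)⁻¹ * ((t:ℂ) - conj z₂)⁻¹) ∂σ with hD
  -- the quadratic form expansion
  have hQexp : ∀ u₁ u₂ : ℂ,
      (γ:ℂ) * ((u₁ + u₂) * conj (u₁ + u₂)) +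
        ∫ t, (t : ℂ) * ((u₁ * ((t:ℂ) - z₁)⁻¹ + u₂ * ((t:ℂ) - z₂)⁻¹) *
          conj (u₁ * ((t:ℂ) - z₁)⁻¹ + u₂ * ((t:ℂ) - z₂)⁻¹)) ∂σ =
      u₁ * conj u₁ * A + u₁ * conj u₂ * B + u₂ * conj u₁ * C + u₂ * conj u₂ * D := by
    intro u₁ u₂
    rw [(Q_expand σ h0 hfin h₁ h₂ u₁ u₂).2, hA, hB, hC, hD]
    simp only [_root_.map_add]
    ring
  -- find a nonzero vector with vanishing quadratic form
  obtain ⟨u₁, u₂, hune, hQ0⟩ : ∃ u₁ u₂ : ℂ, ¬ (u₁ = 0 ∧ u₂ = 0) ∧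
      (γ:ℂ) * ((u₁ + u₂) * conj (u₁ + u₂)) +
        ∫ t, (t : ℂ) * ((u₁ * ((t:ℂ) - z₁)⁻¹ + u₂ * ((t:ℂ) - z₂)⁻¹) *
          conj (u₁ * ((t:ℂ) - z₁)⁻¹ + u₂ * ((t:ℂ) - z₂)⁻¹)) ∂σ = 0 := by
    by_cases hP22 : D = 0
    · refine ⟨0, 1, by simp, ?_⟩
      rw [hQexp 0 1]
      simp [hP22]
    · refine ⟨conj D, -conj C, fun h => hP22 (by
        have := h.1
        rw [← Complex.conj_conj D, this, _root_.map_zero] ), ?_⟩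
      rw [hQexp]
      simp only [Complex.conj_conj, _root_.map_neg]
      linear_combination (conj D) * hdet
  -- convert to a real statement
  have hint := (Q_expand σ h0 hfin h₁ h₂ u₁ u₂).1
  have hgpt : ∀ t : ℝ, (t : ℂ) * ((u₁ * ((t:ℂ) - z₁)⁻¹ + u₂ * ((t:ℂ) - z₂)⁻¹) *
      conj (u₁ * ((t:ℂ) - z₁)⁻¹ + u₂ * ((t:ℂ) - z₂)⁻¹)) =
      ((t * Complex.normSq (u₁ * ((t:ℂ) - z₁)⁻¹ + u₂ * ((t:ℂ) - z₂)⁻¹) : ℝ) : ℂ) := by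
    intro t
    rw [Complex.mul_conj]
    push_cast
    ring
  have hgint : Integrable
      (fun t : ℝ => t * Complex.normSq (u₁ * ((t:ℂ) - z₁)⁻¹ + u₂ * ((t:ℂ) - z₂)⁻¹)) σ := by
    apply hint.re.congr
    filter_upwards with t
    rw [hgpt t]
    exact Complex.ofReal_re _
  have hIeq : ∫ t, (t : ℂ) * ((u₁ * ((t:ℂ) - z₁)⁻¹ + u₂ * ((t:ℂ) - z₂)⁻¹) *
      conj (u₁ * ((t:ℂ) - z₁)⁻¹ + u₂ * ((t:ℂ) - z₂)⁻¹)) ∂σ =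
      ((∫ t, t * Complex.normSq (u₁ * ((t:ℂ) - z₁)⁻¹ + u₂ * ((t:ℂ) - z₂)⁻¹) ∂σ : ℝ) : ℂ) := by
    calc ∫ t, (t : ℂ) * ((u₁ * ((t:ℂ) - z₁)⁻¹ + u₂ * ((t:ℂ) - z₂)⁻¹) *
        conj (u₁ * ((t:ℂ) - z₁)⁻¹ + u₂ * ((t:ℂ) - z₂)⁻¹)) ∂σ
        = ∫ t, ((t * Complex.normSq (u₁ * ((t:ℂ) - z₁)⁻¹ + u₂ * ((t:ℂ) - z₂)⁻¹) : ℝ) : ℂ) ∂σ :=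
          integral_congr_ae (Filter.Eventually.of_forall hgpt)
      _ = _ := integral_ofReal
  have hγterm : (γ:ℂ) * ((u₁ + u₂) * conj (u₁ + u₂)) =
      ((γ * Complex.normSq (u₁ + u₂) : ℝ) : ℂ) := by
    rw [Complex.mul_conj]
    push_cast
    ring
  rw [hIeq, hγterm, ← Complex.ofReal_add] at hQ0
  have hreal : γ * Complex.normSq (u₁ + u₂) +
      ∫ t, t * Complex.normSq (u₁ * ((t:ℂ) - z₁)⁻¹ + u₂ * ((t:ℂ) - z₂)⁻¹) ∂σ = 0 := by
    exact_mod_cast hQ0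
  have hnn : 0 ≤ᵐ[σ] fun t : ℝ =>
      t * Complex.normSq (u₁ * ((t:ℂ) - z₁)⁻¹ + u₂ * ((t:ℂ) - z₂)⁻¹) := by
    filter_upwards [ae_nonneg_of σ h0] with t ht
    exact mul_nonneg ht (Complex.normSq_nonneg _)
  have hInn : 0 ≤ ∫ t, t * Complex.normSq (u₁ * ((t:ℂ) - z₁)⁻¹ + u₂ * ((t:ℂ) - z₂)⁻¹) ∂σ :=
    integral_nonneg_of_ae hnn
  have hγnn : 0 ≤ γ * Complex.normSq (u₁ + u₂) := mul_nonneg hγ (Complex.normSq_nonneg _)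
  have hIzero : ∫ t, t * Complex.normSq (u₁ * ((t:ℂ) - z₁)⁻¹ + u₂ * ((t:ℂ) - z₂)⁻¹) ∂σ = 0 := by
    linarith
  have hγzero : γ * Complex.normSq (u₁ + u₂) = 0 := by linarith
  have haeg : ∀ᵐ (t : ℝ) ∂σ, t * Complex.normSq (u₁ * ((t:ℂ) - z₁)⁻¹ + u₂ * ((t:ℂ) - z₂)⁻¹) = 0 := by
    have := (MeasureTheory.integral_eq_zero_iff_of_nonneg_ae hnn hgint).mp hIzero
    filter_upwards [this] with t ht
    exact ht
  -- key pointwise consequence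
  have hkey : ∀ᵐ (t : ℝ) ∂σ, t = 0 ∨ (u₁ + u₂) * (t:ℂ) = u₁ * z₂ + u₂ * z₁ := by
    filter_upwards [haeg, ae_nonneg_of σ h0] with t hgt ht
    by_cases ht0 : t = 0
    · exact Or.inl ht0
    · right
      have hns : Complex.normSq (u₁ * ((t:ℂ) - z₁)⁻¹ + u₂ * ((t:ℂ) - z₂)⁻¹) = 0 := by
        rcases mul_eq_zero.mp hgt with h | h
        · exact absurd h ht0
        · exact h
      have hF : u₁ * ((t:ℂ) - z₁)⁻¹ + u₂ * ((t:ℂ) - z₂)⁻¹ = 0 := Complex.normSq_eq_zero.mp hns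
      have hz1 : (t:ℂ) - z₁ ≠ 0 := sub_ne_zero.mpr (ne_of_SDom (mem_SDom_of_im_pos h₁) ht)
      have hz2 : (t:ℂ) - z₂ ≠ 0 := sub_ne_zero.mpr (ne_of_SDom (mem_SDom_of_im_pos h₂) ht)
      field_simp at hF
      linear_combination hF
  by_cases hsum : u₁ + u₂ = 0
  · -- first alternative with γ' = γ
    have hu1 : u₁ ≠ 0 := by
      intro h
      apply hune
      constructor
      · exact h
      · rw [h, zero_add] at hsum; exact hsum
    have hae0 : ∀ᵐ t ∂σ, t = 0 := by
      filter_upwards [hkey] with t htk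
      rcases htk with h | h
      · exact h
      · exfalso
        rw [hsum, zero_mul] at h
        have hz12 : z₂ - z₁ ≠ 0 := sub_ne_zero.mpr (Ne.symm hne)
        have hu2 : u₂ = -u₁ := by linear_combination hsum
        apply hu1
        have : u₁ * (z₂ - z₁) = 0 := by rw [hu2] at h; linear_combination -h
        rcases mul_eq_zero.mp this with h' | h'
        · exact h'
        · exact absurd h' hz12
    exact Or.inl (ae_zero_conclude f γ σ h0 hfin hf hγ hae0)
  · have hγ0 : γ = 0 := by
      have hns : Complex.normSq (u₁ + u₂) ≠ 0 := fun h => hsum (Complex.normSq_eq_zero.mp h)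
      rcases mul_eq_zero.mp hγzero with h | h
      · exact h
      · exact absurd h hns
    by_cases hex : ∃ t₁ : ℝ, 0 < t₁ ∧ (t₁ : ℂ) * (u₁ + u₂) = u₁ * z₂ + u₂ * z₁
    · obtain ⟨t₁, ht₁, hct⟩ := hex
      right
      refine ⟨(σ {0}).toReal, (σ {t₁}).toReal, t₁, ENNReal.toReal_nonneg,
        ENNReal.toReal_nonneg, ht₁, ?_⟩
      have haec : ∀ᵐ t ∂σ, t = 0 ∨ t = t₁ := by
        filter_upwards [hkey] with t htk
        rcases htk with h | h
        · exact Or.inl h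
        · right
          have : ((t : ℂ) - (t₁ : ℂ)) * (u₁ + u₂) = 0 := by linear_combination h - hct
          rcases mul_eq_zero.mp this with h' | h'
          · have : (t : ℂ) = (t₁ : ℂ) := by linear_combination h'
            exact_mod_cast this
          · exact absurd h' hsum
      intro z hz
      rw [conclude f γ σ h0 hfin hf ht₁ haec z hz, hγ0]
      push_cast
      ring
    · -- no positive root: measure concentrated at 0
      have hae0 : ∀ᵐ t ∂σ, t = 0 := by
        filter_upwards [hkey, ae_nonneg_of σ h0] with t htk ht
        rcases htk with h | h
        · exact h
        · by_contra ht0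
          exact hex ⟨t, lt_of_le_of_ne ht (Ne.symm ht0), by linear_combination h⟩
      exact Or.inl (ae_zero_conclude f γ σ h0 hfin hf hγ hae0)

theorem statement6 (z₁ z₂ : ℂ) (h₁ : 0 < z₁.im) (h₂ : 0 < z₂.im) (hne : z₁ ≠ z₂)
    (f : ℂ → ℂ) (γ : ℝ) (σ : Measure ℝ) (hrep : IsStieltjesRep f γ σ)
    (hdet : Matrix.det
      !![(z₁ * f z₁ - conj (z₁ * f z₁)) / (z₁ - conj z₁),
         (z₁ * f z₁ - conj (z₂ * f z₂)) / (z₁ - conj z₂);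
         (z₂ * f z₂ - conj (z₁ * f z₁)) / (z₂ - conj z₁),
         (z₂ * f z₂ - conj (z₂ * f z₂)) / (z₂ - conj z₂)] = 0) :
    (∃ γ' s₀ : ℝ, 0 ≤ γ' ∧ 0 ≤ s₀ ∧
        ∀ z ∈ SDom, f z = (γ' : ℂ) - (s₀ : ℂ) / z) ∨
    (∃ s₀ s₁ t₁ : ℝ, 0 ≤ s₀ ∧ 0 ≤ s₁ ∧ 0 < t₁ ∧
        ∀ z ∈ SDom, f z = -(s₀ : ℂ) / z + (s₁ : ℂ) / ((t₁ : ℂ) - z)) := by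
  obtain ⟨hγ, h0, hfin, hf⟩ := hrep
  rw [Matrix.det_fin_two_of] at hdet
  exact statement6' z₁ z₂ h₁ h₂ hne f γ σ hγ h0 hfin hf hdet
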